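/- arXiv:1703.02774 — 6 statements merged into one kernel-verified Lean document; each statement's English description precedes it below -/
import Mathlib

section
/- For any β-(1,0) tree B' whose root has a unique child which is an internal node, there is a unique integer j with 1 ≤ j ≤ root(Π_B(B')) such that B' = Δ_B(Π_B(B'), j). -/
/-- Rooted plane trees with a natural-number label on every node. -/
inductive BTree where
  | node : ℕ → List BTree → BTree

namespace BTree

def label : BTree → ℕ
  | node l _ => l

def children : BTree → List BTree
  | node _ c => c

/-- Sum of the labels of a list of trees (used for the children of a node). -/
def childSum (c : List BTree) : ℕ := (c.map label).sum

end BTree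

/-- The β-(1,0) condition for non-root subtrees: leaves are labeled 1, and internal
nodes carry a label between 1 and the sum of the labels of their children. -/
inductive IsBetaSub : BTree → Prop where
  | leaf : IsBetaSub (.node 1 [])
  | node {l : ℕ} {c : List BTree} (hne : c ≠ []) (h1 : 1 ≤ l)
      (h2 : l ≤ BTree.childSum c) (hc : ∀ t ∈ c, IsBetaSub t) : IsBetaSub (.node l c)

/-- A β-(1,0) tree: the root is internal, its label is the sum of the labels of its
children, and all subtrees satisfy the β-(1,0) condition. -/
def IsBeta : BTree → Prop
  | .node l c => c ≠ [] ∧ l = BTree.childSum c ∧ ∀ t ∈ c, IsBetaSub t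

/-- The label of the root. -/
def rootLabel (B : BTree) : ℕ := B.label

/-- Δ_B(B,i): attach the root of `B` to a new vertex as its unique child, labeling
both the old and the new root by `i`. -/
def deltaB : BTree → ℕ → BTree
  | .node _ c, i => .node i [.node i c]

/-- Π_B: remove the root (which has a unique child) and relabel the new root by
the sum of the labels of its children. -/
def piB : BTree → BTree
  | .node _ [.node _ c] => .node (BTree.childSum c) c
  | t => t

namespace BTree

@[simp]
theorem childSum_singleton (t : BTree) : childSum [t] = t.label := by
  simp [childSum]

end BTree

@[simp]
theorem piB_node_singleton (l m : ℕ) (c : List BTree) :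
    piB (.node l [.node m c]) = .node (BTree.childSum c) c := rfl

@[simp]
theorem deltaB_node (k j : ℕ) (c : List BTree) :
    deltaB (.node k c) j = .node j [.node j c] := rfl

theorem IsBeta.label_eq_of_singleton {l : ℕ} {t : BTree} (h : IsBeta (.node l [t])) :
    l = t.label := by
  simpa using h.2.1

theorem IsBetaSub.label_mem_Icc {t : BTree} (h : IsBetaSub t) (ht : t.children ≠ []) :
    t.label ∈ Set.Icc 1 (BTree.childSum t.children) := by
  cases h with
  | leaf => exact absurd rfl ht
  | node _ h1 h2 _ => exact ⟨h1, h2⟩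

theorem stmt1 (l : ℕ) (c : BTree) (hint : c.children ≠ [])
    (hB : IsBeta (.node l [c])) :
    ∃! j : ℕ, 1 ≤ j ∧ j ≤ rootLabel (piB (.node l [c])) ∧
      BTree.node l [c] = deltaB (piB (.node l [c])) j := by
  obtain ⟨m, c⟩ := c
  have hlm : l = m := hB.label_eq_of_singleton
  subst hlm
  obtain ⟨h1, h2⟩ := (hB.2.2 _ (List.mem_singleton_self _)).label_mem_Icc hint
  refine ⟨l, ⟨h1, h2, rfl⟩, ?_⟩
  rintro j ⟨-, -, hj⟩
  simp only [piB_node_singleton, deltaB_node, BTree.node.injEq] at hj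
  exact hj.1.symm
end

section
/- For β-(1,0) trees B1, B2 and an integer i with 1 ≤ i ≤ root(B1), the tree ⊕_B(B1, i, B2) obtained by identifying the roots of Δ_B(B1,i) and B2 (with the old root of B1 as leftmost child of the merged root, whose label is the sum of its children's labels) is a β-(1,0) tree satisfying hd_B(⊕_B(B1,i,B2)) = B1, tl_B(⊕_B(B1,i,B2)) = B2 and root(⊕_B(B1,i,B2)) = i + root(B2). -/
/-- ⊕_B(B1,i,B2): identify the roots of Δ_B(B1,i) and B2, with the old root of B1
(relabeled i) as leftmost child of the merged root, whose label is the sum of the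
labels of its children. -/
def oplusB (B1 : BTree) (i : ℕ) (B2 : BTree) : BTree :=
  .node (BTree.childSum (.node i B1.children :: B2.children))
    (.node i B1.children :: B2.children)

/-- hd_B: the subtree rooted at the leftmost child of the root, with its root label
adjusted to the sum of the labels of its children. -/
def hdB : BTree → BTree
  | .node _ (.node _ c :: _) => .node (BTree.childSum c) c
  | t => t

/-- tl_B: the tree remaining after removing the leftmost child of the root, with the
root label adjusted to the sum of the labels of its children. -/
def tlB : BTree → BTree
  | .node _ (_ :: rest) => .node (BTree.childSum rest) rest
  | t => t

namespace IsBeta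

theorem node_childSum_children {B : BTree} (h : IsBeta B) :
    BTree.node (BTree.childSum B.children) B.children = B := by
  obtain ⟨l, c⟩ := B
  obtain ⟨-, rfl, -⟩ := h
  rfl

theorem label_eq_childSum {B : BTree} (h : IsBeta B) :
    B.label = BTree.childSum B.children := by
  obtain ⟨l, c⟩ := B
  exact h.2.1

theorem isBetaSub_relabel {B : BTree} (h : IsBeta B) {i : ℕ} (hi1 : 1 ≤ i)
    (hi2 : i ≤ B.label) : IsBetaSub (.node i B.children) := by
  obtain ⟨l, c⟩ := B
  obtain ⟨hne, rfl, hsub⟩ := h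
  exact .node hne hi1 hi2 hsub

end IsBeta

theorem isBeta_oplusB {B1 B2 : BTree} {i : ℕ} (h1 : IsBeta B1) (h2 : IsBeta B2)
    (hi1 : 1 ≤ i) (hi2 : i ≤ B1.label) : IsBeta (oplusB B1 i B2) := by
  obtain ⟨l2, c2⟩ := B2
  refine ⟨List.cons_ne_nil _ _, rfl, fun t ht => ?_⟩
  rcases List.mem_cons.mp ht with rfl | ht
  · exact h1.isBetaSub_relabel hi1 hi2
  · exact h2.2.2 t ht

theorem hdB_oplusB (B1 : BTree) (i : ℕ) (B2 : BTree) :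
    hdB (oplusB B1 i B2) = .node (BTree.childSum B1.children) B1.children :=
  rfl

theorem tlB_oplusB (B1 : BTree) (i : ℕ) (B2 : BTree) :
    tlB (oplusB B1 i B2) = .node (BTree.childSum B2.children) B2.children :=
  rfl

theorem rootLabel_oplusB (B1 : BTree) (i : ℕ) (B2 : BTree) :
    rootLabel (oplusB B1 i B2) = i + BTree.childSum B2.children := by
  simp [rootLabel, oplusB, BTree.label, BTree.childSum]

theorem stmt2 (B1 B2 : BTree) (i : ℕ) (h1 : IsBeta B1) (h2 : IsBeta B2)
    (hi1 : 1 ≤ i) (hi2 : i ≤ rootLabel B1) :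
    IsBeta (oplusB B1 i B2) ∧ hdB (oplusB B1 i B2) = B1 ∧
      tlB (oplusB B1 i B2) = B2 ∧ rootLabel (oplusB B1 i B2) = i + rootLabel B2 :=
  ⟨isBeta_oplusB h1 h2 hi1 hi2,
    (hdB_oplusB B1 i B2).trans h1.node_childSum_children,
    (tlB_oplusB B1 i B2).trans h2.node_childSum_children,
    (rootLabel_oplusB B1 i B2).trans (congrArg (i + ·) h2.label_eq_childSum.symm)⟩
end

section
/- The transformation mir on Dyck paths, defined recursively by mir(ε) = ε and mir(D1 u D2 d) = mir(D2) u mir(D1) d (where D = D1 u D2 d is the unique decomposition with D1, D2 Dyck paths, D2 starting at the last non-initial contact of D), is an involution on Dyck paths of size n for every n. -/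
/-- A Dyck path: a word in `u = true`, `d = false` with equally many `u`'s and `d`'s,
every prefix of which has at least as many `u`'s as `d`'s. -/
def IsDyck (w : List Bool) : Prop :=
  w.count true = w.count false ∧ ∀ p, p <+: w → p.count false ≤ p.count true

/-- The number of non-initial contacts of a path: the number of nonempty balanced
prefixes. -/
def ncontacts (w : List Bool) : ℕ :=
  ((List.range w.length).filter
    (fun j => (w.take (j + 1)).count true = (w.take (j + 1)).count false)).length

/-- The involution `mir` on Dyck paths, defined recursively by `mir ε = ε` and
`mir (D₁ u D₂ d) = mir D₂ u mir D₁ d`, where a nonempty Dyck path is uniquely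
written `D₁ u D₂ d` with `D₁, D₂` Dyck paths and `D₂` starting right after the
last non-initial contact before the endpoint (so `D₁` is the longest proper
balanced prefix). -/
def mir (w : List Bool) : List Bool :=
  if hw : w = [] then []
  else
    let e := w.dropLast
    let j := ((List.range e.length).filter
      (fun j => (e.take j).count true = (e.take j).count false)).foldr max 0
    mir (e.drop (j + 1)) ++ true :: (mir (e.take j) ++ [false])
termination_by w.length
decreasing_by
  all_goals
    have hp := List.length_pos_iff.mpr hw
    simp only [List.length_drop, List.length_take, List.length_dropLast]
    omega

/-! A nonempty Dyck path splits as `D₁ u D₂ d` with `D₁, D₂` Dyck paths, and for *any* such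
splitting the longest proper balanced prefix of `D₁ u D₂` is `D₁`, since every longer prefix has
one more `u` than `d`. Hence `mir (D₁ u D₂ d) = mir D₂ u mir D₁ d` for all Dyck paths `D₁, D₂`;
as the right-hand side is again split this way, induction along the splitting gives
`mir (mir D) = D`. -/

theorem List.IsPrefix.prefix_or_eq_append {α : Type*} {p l₁ l₂ : List α} (h : p <+: l₁ ++ l₂) :
    p <+: l₁ ∨ ∃ q, q <+: l₂ ∧ p = l₁ ++ q := by
  rcases le_total p.length l₁.length with hle | hle
  · exact .inl ((List.isPrefix_append_of_length hle).1 h)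
  · have hl₁ : l₁ <+: p := List.prefix_of_prefix_length_le (List.prefix_append _ _) h hle
    have hp := List.prefix_append_drop hl₁
    exact .inr ⟨_, (List.prefix_append_right_inj l₁).1 (hp ▸ h), hp⟩

theorem List.foldr_max_eq_of_mem {l : List ℕ} {m : ℕ} (hm : m ∈ l) (h : ∀ x ∈ l, x ≤ m) :
    l.foldr max 0 = m :=
  le_antisymm (List.max_le_of_forall_le l m h) (List.le_max_of_le hm le_rfl)

section Dyck

variable {w D D₁ D₂ : List Bool}

theorem isDyck_nil : IsDyck [] :=
  ⟨rfl, fun p hp => by simp [List.prefix_nil.1 hp]⟩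

theorem IsDyck.append (h₁ : IsDyck D₁) (h₂ : IsDyck D₂) : IsDyck (D₁ ++ D₂) := by
  refine ⟨by simp [List.count_append, h₁.1, h₂.1], fun p hp => ?_⟩
  rcases hp.prefix_or_eq_append with hp | ⟨q, hq, rfl⟩
  · exact h₁.2 p hp
  · have := h₂.2 q hq
    have := h₁.1
    simp only [List.count_append]
    omega

theorem IsDyck.nest (h : IsDyck D) : IsDyck (true :: (D ++ [false])) := by
  refine ⟨by simp [h.1], fun p hp => ?_⟩
  rcases List.prefix_cons_iff.1 hp with rfl | ⟨q, rfl, hq⟩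
  · simp
  rcases List.prefix_concat_iff.1 hq with rfl | hq
  · simp [h.1]
  · have := h.2 q hq
    simp only [List.count_cons_self, List.count_cons_of_ne Bool.false_ne_true.symm]
    omega

theorem IsDyck.of_append (h : IsDyck (D₁ ++ D₂)) (h₁ : D₁.count true = D₁.count false) :
    IsDyck D₁ ∧ IsDyck D₂ := by
  refine ⟨⟨h₁, fun p hp => h.2 p (hp.trans (List.prefix_append _ _))⟩, ?_, fun q hq => ?_⟩
  · have := h.1
    simp only [List.count_append] at this
    omega
  · have := h.2 (D₁ ++ q) ((List.prefix_append_right_inj D₁).2 hq)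
    simp only [List.count_append] at this
    omega

theorem IsDyck.exists_eq_nest (h : IsDyck w) (hw : w ≠ [])
    (hprim : ∀ p, p <+: w → 0 < p.length → p.length < w.length → p.count true ≠ p.count false) :
    ∃ D, IsDyck D ∧ w = true :: (D ++ [false]) := by
  obtain ⟨a, t, rfl⟩ := List.exists_cons_of_ne_nil hw
  cases a
  · simpa using h.2 [false] (by simp)
  rcases List.eq_nil_or_concat t with rfl | ⟨D, b, rfl⟩
  · simpa [IsDyck] using h.1
  rw [List.concat_eq_append] at h hprim ⊢
  have hbal := h.1
  have hD := h.2 (true :: D) (List.cons_prefix_cons.2 ⟨rfl, List.prefix_append _ _⟩)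
  simp only [List.count_cons_self, List.count_cons_of_ne Bool.false_ne_true.symm,
    List.count_append] at hbal hD
  cases b
  · refine ⟨D, ⟨?_, fun q hq => ?_⟩, rfl⟩
    · simp only [List.count_singleton_self, List.count_cons_of_ne Bool.false_ne_true,
        List.count_nil] at hbal
      omega
    · have hq' : true :: q <+: true :: (D ++ [false]) :=
        List.cons_prefix_cons.2 ⟨rfl, hq.trans (List.prefix_append _ _)⟩
      have h₁ := h.2 _ hq'
      have h₂ := hprim _ hq' (List.length_pos_of_ne_nil (List.cons_ne_nil _ _))
        (by simpa using hq.length_le)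
      simp only [List.count_cons_self, List.count_cons_of_ne Bool.false_ne_true.symm] at h₁ h₂
      omega
  · simp only [List.count_singleton_self, List.count_cons_of_ne Bool.false_ne_true.symm,
      List.count_nil] at hbal
    omega

theorem IsDyck.exists_eq_append_nest (h : IsDyck w) (hw : w ≠ []) :
    ∃ D₁ D₂, IsDyck D₁ ∧ IsDyck D₂ ∧ w = D₁ ++ true :: (D₂ ++ [false]) := by
  classical
  -- `D₁` is the longest proper balanced prefix, so what follows it is a primitive Dyck path.
  set P : ℕ → Prop := fun k => (w.take k).count true = (w.take k).count false with hP
  set j := Nat.findGreatest P (w.length - 1)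
  have hj_bal : P j := Nat.findGreatest_spec (Nat.zero_le _) (by simp [hP])
  have hj_lt : j < w.length :=
    (Nat.findGreatest_le _).trans_lt (by have := List.length_pos_iff.2 hw; omega)
  obtain ⟨hD₁, hr⟩ := (w.take_append_drop j ▸ h).of_append hj_bal
  obtain ⟨D₂, hD₂, hr_eq⟩ := hr.exists_eq_nest (by simpa using hj_lt)
    fun p hp hp_pos hp_lt hp_bal => by
      have htake : w.take (j + p.length) = w.take j ++ p := by
        rw [List.take_add, ← List.prefix_iff_eq_take.1 hp]
      refine Nat.findGreatest_is_greatest (by omega : j < j + p.length)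
        (by rw [List.length_drop] at hp_lt; omega) ?_
      simp only [hP, htake, List.count_append, hp_bal, add_left_inj]
      exact hj_bal
  exact ⟨_, D₂, hD₁, hD₂, by rw [← hr_eq, List.take_append_drop]⟩

theorem IsDyck.induction {motive : (w : List Bool) → IsDyck w → Prop}
    (nil : motive [] isDyck_nil)
    (append_nest : ∀ D₁ D₂ (h₁ : IsDyck D₁) (h₂ : IsDyck D₂), motive D₁ h₁ → motive D₂ h₂ →
      motive (D₁ ++ true :: (D₂ ++ [false])) (h₁.append h₂.nest))
    (w : List Bool) (h : IsDyck w) : motive w h := by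
  induction hn : w.length using Nat.strong_induction_on generalizing w with
  | _ n ih =>
    rcases eq_or_ne w [] with rfl | hw
    · exact nil
    obtain ⟨D₁, D₂, h₁, h₂, rfl⟩ := h.exists_eq_append_nest hw
    simp only [List.length_append, List.length_cons] at hn
    exact append_nest D₁ D₂ h₁ h₂ (ih _ (by omega) _ h₁ rfl) (ih _ (by omega) _ h₂ rfl)

end Dyck

theorem mir_nil : mir [] = [] := by
  rw [mir]
  rfl

theorem mir_append_nest {D₁ D₂ : List Bool} (h₁ : D₁.count true = D₁.count false)
    (h₂ : IsDyck D₂) :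
    mir (D₁ ++ true :: (D₂ ++ [false])) = mir D₂ ++ true :: (mir D₁ ++ [false]) := by
  have hlast : (D₁ ++ true :: (D₂ ++ [false])).dropLast = D₁ ++ true :: D₂ := by
    rw [show D₁ ++ true :: (D₂ ++ [false]) = D₁ ++ true :: D₂ ++ [false] by simp,
      List.dropLast_concat]
  have hj : ((List.range (D₁ ++ true :: D₂).length).filter (fun j =>
      ((D₁ ++ true :: D₂).take j).count true = ((D₁ ++ true :: D₂).take j).count false)).foldr
      max 0 = D₁.length := by
    refine List.foldr_max_eq_of_mem (by simpa using h₁) fun x hx => ?_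
    by_contra! hlt
    obtain ⟨i, rfl⟩ : ∃ i, x = D₁.length + (i + 1) := ⟨x - D₁.length - 1, by omega⟩
    have := h₂.2 _ (D₂.take_prefix i)
    simp only [List.mem_filter, List.mem_range, List.take_length_add_append, List.take_succ_cons,
      List.count_append, List.count_cons_self, List.count_cons_of_ne Bool.false_ne_true.symm,
      decide_eq_true_eq] at hx
    omega
  rw [mir, dif_neg (by simp)]
  simp only [hlast, hj]
  simp

theorem stmt7 (w : List Bool) (h : IsDyck w) :
    IsDyck (mir w) ∧ (mir w).count true = w.count true ∧ mir (mir w) = w := by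
  induction w, h using IsDyck.induction with
  | nil => exact ⟨by rw [mir_nil]; exact isDyck_nil, by rw [mir_nil], by rw [mir_nil, mir_nil]⟩
  | append_nest D₁ D₂ h₁ h₂ ih₁ ih₂ =>
    obtain ⟨hm₁, hc₁, hmm₁⟩ := ih₁
    obtain ⟨hm₂, hc₂, hmm₂⟩ := ih₂
    rw [mir_append_nest h₁.1 h₂, mir_append_nest hm₂.1 hm₁, hmm₁, hmm₂]
    refine ⟨hm₂.append hm₁.nest, ?_, rfl⟩
    simp only [List.count_append, List.count_cons_self, hc₁, hc₂]
    omega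
end

section
/- For Dyck paths D1 and D2 of the same size with D1 ⪯ D2 in the Tamari lattice, we have mir(D2) ⪯ mir(D1). -/
/-- The Tamari covering relation: `D = V d D₁ W` covers `D' = V D₁ d W`, where `D₁`
is a nonempty Dyck path. `TCov D D'` means `D` covers `D'`. -/
inductive TCov : List Bool → List Bool → Prop where
  | mk (V W D1 : List Bool) (h : IsDyck D1) (hne : D1 ≠ []) :
      TCov (V ++ false :: (D1 ++ W)) (V ++ D1 ++ false :: W)

/-- The Tamari order: reflexive-transitive closure of the covering relation
(`TamariLE D' D` holds when `D' ⪯ D`). -/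
def TamariLE : List Bool → List Bool → Prop :=
  Relation.ReflTransGen (fun x y => TCov y x)

/-!
Reading a Dyck path through its last-return decomposition `D = D₁ u D₂ d` identifies Dyck paths
with binary trees, `toPath (l △ r) = toPath l u (toPath r) d`, and `mir` becomes the left-right
mirror of trees. Moving a down-step past a primitive factor `u A d` is a single rotation
`(a △ b) △ c ↦ a △ (b △ c)` of the tree, and moving it past a general Dyck factor is a sequence
of such moves; so `D' ⪯ D` exactly when the tree of `D'` is reached from that of `D` by rotations.
Mirroring turns each rotation around, which reverses the order.
-/

open BinaryTree Relation

def pathHeight (w : List Bool) : ℤ := w.count true - w.count false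

@[simp] lemma pathHeight_nil : pathHeight [] = 0 := rfl

@[simp] lemma pathHeight_cons (b : Bool) (w : List Bool) :
    pathHeight (b :: w) = (if b then 1 else -1) + pathHeight w := by
  cases b <;> simp [pathHeight] <;> ring

@[simp] lemma pathHeight_append (v w : List Bool) :
    pathHeight (v ++ w) = pathHeight v + pathHeight w := by
  simp [pathHeight, List.count_append]; ring

lemma isDyck_iff {w : List Bool} :
    IsDyck w ↔ pathHeight w = 0 ∧ ∀ p, p <+: w → 0 ≤ pathHeight p := by
  simp only [IsDyck, pathHeight, sub_eq_zero, sub_nonneg, Nat.cast_inj, Nat.cast_le]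

lemma IsDyck.pathHeight_eq {w : List Bool} (hw : IsDyck w) : pathHeight w = 0 :=
  (isDyck_iff.mp hw).1

lemma IsDyck.pathHeight_nonneg {w p : List Bool} (hw : IsDyck w) (hp : p <+: w) :
    0 ≤ pathHeight p :=
  (isDyck_iff.mp hw).2 p hp

lemma List.IsPrefix.append_cases {α : Type*} {p a b : List α} (h : p <+: a ++ b) :
    p <+: a ∨ ∃ q, q <+: b ∧ p = a ++ q := by
  obtain ⟨t, ht⟩ := h
  rcases List.append_eq_append_iff.mp ht with ⟨s, rfl, -⟩ | ⟨q, rfl, hb⟩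
  · exact .inl (List.prefix_append p s)
  · exact .inr ⟨q, ⟨t, hb.symm⟩, rfl⟩

lemma IsDyck.append_up_append_down {A B : List Bool} (hA : IsDyck A) (hB : IsDyck B) :
    IsDyck (A ++ true :: (B ++ [false])) := by
  refine isDyck_iff.mpr ⟨by simp [hA.pathHeight_eq, hB.pathHeight_eq], fun p hp => ?_⟩
  rcases hp.append_cases with hp | ⟨q, hq, rfl⟩
  · exact hA.pathHeight_nonneg hp
  rcases List.prefix_cons_iff.mp hq with rfl | ⟨t, rfl, ht⟩
  · simp [hA.pathHeight_eq]
  rcases List.prefix_concat_iff.mp ht with rfl | ht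
  · simp [hA.pathHeight_eq, hB.pathHeight_eq]
  · have := hB.pathHeight_nonneg ht
    simp [hA.pathHeight_eq]
    omega

lemma IsDyck.not_append_false_prefix {A B : List Bool} (hA : pathHeight A = 0)
    (hB : IsDyck B) : ¬ A ++ [false] <+: B := fun h => by
  have := hB.pathHeight_nonneg h
  simp [hA] at this

lemma IsDyck.append_false_inj {A B W W' : List Bool} (hA : IsDyck A) (hB : IsDyck B)
    (h : A ++ false :: W = B ++ false :: W') : A = B ∧ W = W' := by
  rcases List.append_eq_append_iff.mp h with ⟨s, rfl, hs⟩ | ⟨s, rfl, hs⟩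
  · rcases s with _ | ⟨c, s⟩
    · simpa using hs
    · obtain ⟨rfl, -⟩ := List.cons.inj hs
      exact absurd ⟨s, by simp⟩ (hB.not_append_false_prefix hA.pathHeight_eq)
  · rcases s with _ | ⟨c, s⟩
    · simpa using hs.symm
    · obtain ⟨rfl, -⟩ := List.cons.inj hs
      exact absurd ⟨s, by simp⟩ (hA.not_append_false_prefix hB.pathHeight_eq)

lemma eq_nil_of_prefix_of_pathHeight_nonpos {A E : List Bool} (hA : IsDyck A)
    (hE : E <+: true :: A) (hE0 : pathHeight E ≤ 0) : E = [] := by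
  rcases List.prefix_cons_iff.mp hE with rfl | ⟨t, rfl, ht⟩
  · rfl
  · have := hA.pathHeight_nonneg ht
    simp at hE0
    omega

lemma IsDyck.pathHeight_nonpos_of_eq_append_false {w V E : List Bool} (hw : IsDyck w)
    (h : w = V ++ false :: E) : pathHeight E ≤ 0 := by
  have hV := hw.pathHeight_nonneg (p := V ++ [false]) ⟨E, by simp [h]⟩
  have := hw.pathHeight_eq
  simp [h] at hV this
  omega

lemma IsDyck.not_isDyck_append_false_true {A : List Bool} (hA : IsDyck A) (V : List Bool) :
    ¬ IsDyck (V ++ false :: true :: A) := fun h => by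
  have hV : pathHeight V = 0 := by
    have := h.pathHeight_eq
    simp [hA.pathHeight_eq] at this
    omega
  exact h.not_append_false_prefix hV ⟨true :: A, by simp⟩

def toPath : BinaryTree Unit → List Bool
  | nil => []
  | node _ l r => toPath l ++ true :: (toPath r ++ [false])

@[simp] lemma toPath_nil : toPath nil = [] := rfl

@[simp] lemma toPath_node (l r : BinaryTree Unit) :
    toPath (l △ r) = toPath l ++ true :: (toPath r ++ [false]) := rfl

lemma isDyck_toPath (T : BinaryTree Unit) : IsDyck (toPath T) := by
  induction T using BinaryTree.unitRecOn with
  | base => simp [isDyck_iff]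
  | ind l r hl hr => exact hl.append_up_append_down hr

/-- `stackPath [Sₖ, …, S₁] T` is the path `S₁ u S₂ u ⋯ Sₖ u T` of height `k`. -/
def stackPath : List (BinaryTree Unit) → BinaryTree Unit → List Bool
  | [], T => toPath T
  | S :: ss, T => stackPath ss S ++ true :: toPath T

lemma pathHeight_stackPath (ss : List (BinaryTree Unit)) (T : BinaryTree Unit) :
    pathHeight (stackPath ss T) = ss.length := by
  induction ss generalizing T with
  | nil => exact (isDyck_toPath T).pathHeight_eq
  | cons S ss ih => simp [stackPath, ih, (isDyck_toPath T).pathHeight_eq]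

lemma stackPath_node (ss : List (BinaryTree Unit)) (S T : BinaryTree Unit) :
    stackPath ss (S △ T) = stackPath (S :: ss) T ++ [false] := by
  cases ss <;> simp [stackPath]

/-- Every path staying weakly above the axis is parsed from left to right by a stack of trees:
an up-step pushes an empty tree, a down-step joins the two topmost trees. -/
lemma exists_stackPath {w : List Bool} (hw : ∀ p, p <+: w → 0 ≤ pathHeight p) :
    ∃ ss T, stackPath ss T = w := by
  induction w using List.reverseRecOn with
  | nil => exact ⟨[], nil, rfl⟩
  | append_singleton w b ih =>
    obtain ⟨ss, T, rfl⟩ := ih fun p hp => hw p (hp.trans (List.prefix_append _ _))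
    cases b
    · rcases ss with _ | ⟨S, ss⟩
      · have := hw _ (List.prefix_refl _)
        simp [pathHeight_stackPath] at this
      · exact ⟨ss, S △ T, stackPath_node ss S T⟩
    · exact ⟨T :: ss, nil, by simp [stackPath]⟩

lemma exists_toPath_of_isDyck {w : List Bool} (hw : IsDyck w) : ∃ T, toPath T = w := by
  obtain ⟨ss, T, rfl⟩ := exists_stackPath (isDyck_iff.mp hw).2
  rcases ss with _ | ⟨S, ss⟩
  · exact ⟨T, rfl⟩
  · have := hw.pathHeight_eq
    simp only [pathHeight_stackPath, List.length_cons] at this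
    omega

def mirror : BinaryTree Unit → BinaryTree Unit
  | nil => nil
  | node _ l r => mirror r △ mirror l

/-- This is the index `j` that `mir` computes on `toPath (l △ r)`: every prefix of
`toPath l ++ true :: toPath r` longer than `toPath l` ends strictly above the axis. -/
lemma foldr_max_balanced_prefix (l r : BinaryTree Unit) :
    let e := toPath l ++ true :: toPath r
    ((List.range e.length).filter
      (fun j => (e.take j).count true = (e.take j).count false)).foldr max 0 =
      (toPath l).length := by
  intro e
  have hbal {j : ℕ} : (e.take j).count true = (e.take j).count false ↔
      pathHeight (e.take j) = 0 := by
    simp only [pathHeight, sub_eq_zero, Nat.cast_inj]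
  refine le_antisymm (List.max_le_of_forall_le _ _ fun j hj => ?_)
    (List.le_max_of_le (List.mem_filter.mpr ⟨?_, ?_⟩) le_rfl)
  · rw [List.mem_filter, decide_eq_true_iff, hbal] at hj
    by_contra! hlt
    obtain ⟨k, rfl⟩ := Nat.exists_eq_add_of_lt hlt
    have := (isDyck_toPath r).pathHeight_nonneg (List.take_prefix k (toPath r))
    rw [add_assoc, List.take_length_add_append] at hj
    simp [(isDyck_toPath l).pathHeight_eq] at hj
    omega
  · simp [e]
  · rw [decide_eq_true_iff, hbal]
    simp [e, (isDyck_toPath l).pathHeight_eq]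

lemma mir_toPath_node (l r : BinaryTree Unit) :
    mir (toPath (l △ r)) = mir (toPath r) ++ true :: (mir (toPath l) ++ [false]) := by
  have he : (toPath (l △ r)).dropLast = toPath l ++ true :: toPath r := by
    simpa using List.dropLast_concat (l₁ := toPath l ++ true :: toPath r) (b := false)
  rw [mir, dif_neg (by simp)]
  simp only [he, foldr_max_balanced_prefix]
  simp

lemma mir_toPath (T : BinaryTree Unit) : mir (toPath T) = toPath (mirror T) := by
  induction T using BinaryTree.unitRecOn with
  | base => simp [mir, mirror]
  | ind l r hl hr => rw [mir_toPath_node, hl, hr]; rfl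

inductive Rotation : BinaryTree Unit → BinaryTree Unit → Prop
  | root (a b c : BinaryTree Unit) : Rotation ((a △ b) △ c) (a △ (b △ c))
  | left {l l' : BinaryTree Unit} (r : BinaryTree Unit) : Rotation l l' → Rotation (l △ r) (l' △ r)
  | right (l : BinaryTree Unit) {r r' : BinaryTree Unit} :
      Rotation r r' → Rotation (l △ r) (l △ r')

lemma Rotation.mirror {S T : BinaryTree Unit} (h : Rotation S T) :
    Rotation (mirror T) (mirror S) := by
  induction h with
  | root a b c => exact .root _ _ _
  | left r _ ih => exact .right _ ih
  | right l _ ih => exact .left _ ih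

lemma reflTransGen_rotation_mirror {S T : BinaryTree Unit} (h : ReflTransGen Rotation S T) :
    ReflTransGen Rotation (mirror T) (mirror S) :=
  reflTransGen_swap.mp (ReflTransGen.lift mirror (fun _ _ h => h.mirror) _ _ h)

lemma TCov.append_right {x y : List Bool} (z : List Bool) (h : TCov x y) :
    TCov (x ++ z) (y ++ z) := by
  obtain ⟨V, W, D, hD, hne⟩ := h
  simpa using TCov.mk V (W ++ z) D hD hne

lemma TCov.append_left (z : List Bool) {x y : List Bool} (h : TCov x y) :
    TCov (z ++ x) (z ++ y) := by
  obtain ⟨V, W, D, hD, hne⟩ := h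
  simpa using TCov.mk (z ++ V) W D hD hne

lemma Rotation.tCov {S T : BinaryTree Unit} (h : Rotation S T) : TCov (toPath S) (toPath T) := by
  induction h with
  | root a b c =>
    simpa using TCov.mk (toPath a ++ true :: toPath b) [] _ (isDyck_toPath (nil △ c))
      (by simp)
  | left r _ ih => simpa using ih.append_right (true :: (toPath r ++ [false]))
  | right l _ ih => simpa using (ih.append_right [false]).append_left (toPath l ++ [true])

lemma tamariLE_of_reflTransGen_rotation {S T : BinaryTree Unit}
    (h : ReflTransGen Rotation S T) : TamariLE (toPath T) (toPath S) :=
  reflTransGen_swap.mpr (ReflTransGen.lift toPath (fun _ _ h => h.tCov) _ _ h)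

lemma exists_rotation_root {l r : BinaryTree Unit} {V A W : List Bool} (hA : IsDyck A)
    (hl : toPath l = V ++ [false]) (hr : A ++ false :: W = toPath r ++ [false]) :
    ∃ T, Rotation (l △ r) T ∧ toPath T = V ++ true :: (A ++ false :: false :: W) := by
  obtain ⟨rfl, rfl⟩ := hA.append_false_inj (isDyck_toPath r) hr
  rcases l with _ | ⟨⟨⟩, a, b⟩
  · simp at hl
  · have hV : toPath a ++ true :: toPath b = V :=
      List.append_cancel_right (as := _ ++ _) (by simpa using hl)
    exact ⟨a △ (b △ r), .root a b r, by simp [← hV]⟩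

lemma exists_rotation_of_toPath_eq {A : List Bool} (hA : IsDyck A) (S : BinaryTree Unit) :
    ∀ {V W : List Bool}, toPath S = V ++ false :: true :: (A ++ false :: W) →
      ∃ T, Rotation S T ∧ toPath T = V ++ true :: (A ++ false :: false :: W) := by
  induction S using BinaryTree.unitRecOn with
  | base => intro V W h; simp at h
  | ind l r ihl ihr =>
    intro V W h
    rw [toPath_node] at h
    rcases List.append_eq_append_iff.mp h with ⟨_ | ⟨c, V₁⟩, rfl, hr⟩ | ⟨_ | ⟨c, E⟩, hl, hr⟩
    · simp at hr
    · -- the down-step lies in the right subtree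
      rw [List.cons_append, List.cons.injEq] at hr
      obtain ⟨rfl, hr⟩ := hr
      rcases List.eq_nil_or_concat W with rfl | ⟨W, c, rfl⟩
      · have hr : toPath r = V₁ ++ false :: true :: A :=
          List.append_cancel_right (by simpa using hr)
        exact absurd (hr ▸ isDyck_toPath r) (hA.not_isDyck_append_false_true V₁)
      · have hr : toPath r ++ [false] = (V₁ ++ false :: true :: (A ++ false :: W)) ++ [c] := by
          simpa using hr
        obtain ⟨hr, hc⟩ := List.append_inj' hr rfl
        obtain ⟨T, hT, hpath⟩ := ihr hr
        obtain rfl : false = c := by simpa using hc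
        exact ⟨l △ T, .right l hT, by simp [hpath]⟩
    · simp at hr
    · -- the down-step lies in the left subtree
      rw [List.cons_append, List.cons.injEq] at hr
      obtain ⟨rfl, hr⟩ := hr
      rcases le_or_gt (A.length + 2) E.length with hlen | hlen
      · obtain ⟨W', rfl⟩ : true :: (A ++ [false]) <+: E :=
          List.prefix_of_prefix_length_le ⟨W, by simp⟩ ⟨_, hr.symm⟩ (by simp; omega)
        obtain rfl : W = W' ++ true :: (toPath r ++ [false]) := by simpa using hr
        obtain ⟨T, hT, hpath⟩ := ihl (W := W') (by simpa using hl)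
        exact ⟨T △ r, .left r hT, by simp [hpath]⟩
      · -- `u A d` straddles the root: it must be the whole right part `u (toPath r) d`
        obtain rfl : E = [] := eq_nil_of_prefix_of_pathHeight_nonpos hA
          (List.prefix_of_prefix_length_le ⟨_, hr.symm⟩ ⟨false :: W, by simp⟩ (by simp; omega))
          ((isDyck_toPath l).pathHeight_nonpos_of_eq_append_false hl)
        exact exists_rotation_root hA hl (by simpa using hr)

/-- Writing `toPath U = toPath U₁ u (toPath U₂) d`, a down-step moves past `toPath U` by first
moving past `toPath U₁` and then past the primitive path `u (toPath U₂) d`. -/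
lemma exists_reflTransGen_rotation_of_toPath_eq (U : BinaryTree Unit) :
    ∀ {S : BinaryTree Unit} {V W : List Bool}, toPath S = V ++ false :: (toPath U ++ W) →
      ∃ T, ReflTransGen Rotation S T ∧ toPath T = V ++ toPath U ++ false :: W := by
  induction U using BinaryTree.unitRecOn with
  | base => exact fun {S} _ _ h => ⟨S, .refl, by simpa using h⟩
  | ind U₁ U₂ ih₁ _ =>
    intro S V W h
    obtain ⟨T₁, hST₁, h₁⟩ := ih₁ (W := true :: (toPath U₂ ++ false :: W)) (by simpa using h)
    obtain ⟨T, hT₁T, hT⟩ := exists_rotation_of_toPath_eq (isDyck_toPath U₂) T₁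
      (V := V ++ toPath U₁) (by simpa using h₁)
    exact ⟨T, hST₁.tail hT₁T, by simpa using hT⟩

lemma TCov.exists_reflTransGen_rotation {S : BinaryTree Unit} {y : List Bool}
    (h : TCov (toPath S) y) : ∃ T, ReflTransGen Rotation S T ∧ toPath T = y := by
  generalize hx : toPath S = x at h
  obtain ⟨V, W, D, hD, -⟩ := h
  obtain ⟨U, rfl⟩ := exists_toPath_of_isDyck hD
  exact exists_reflTransGen_rotation_of_toPath_eq U hx

lemma exists_reflTransGen_rotation_of_tamariLE {x y : List Bool} (h : TamariLE x y) :
    ∀ S, toPath S = y → ∃ T, ReflTransGen Rotation S T ∧ toPath T = x := by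
  induction h with
  | refl => exact fun S hS => ⟨S, .refl, hS⟩
  | tail _ hcov ih =>
    rintro S rfl
    obtain ⟨T₁, hST₁, rfl⟩ := hcov.exists_reflTransGen_rotation
    obtain ⟨T, hT₁T, rfl⟩ := ih T₁ rfl
    exact ⟨T, hST₁.trans hT₁T, rfl⟩

theorem stmt8_general (D1 D2 : List Bool) (h2 : IsDyck D2) (hle : TamariLE D1 D2) :
    TamariLE (mir D2) (mir D1) := by
  obtain ⟨S, rfl⟩ := exists_toPath_of_isDyck h2
  obtain ⟨T, hST, rfl⟩ := exists_reflTransGen_rotation_of_tamariLE hle S rfl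
  rw [mir_toPath, mir_toPath]
  exact tamariLE_of_reflTransGen_rotation (reflTransGen_rotation_mirror hST)

theorem stmt8 (D1 D2 : List Bool) (h1 : IsDyck D1) (h2 : IsDyck D2)
    (hsize : D1.count true = D2.count true) (hle : TamariLE D1 D2) :
    TamariLE (mir D2) (mir D1) :=
  stmt8_general D1 D2 h2 hle
end

section
/- If P = P1 u P2 d u P3 d ⋯ u Pk d where P1, P2, …, Pk are (possibly empty) Dyck paths, then mir(P) = mir(Pk) u mir(P_{k-1}) u ⋯ u mir(P1) d^{k-1}. -/
lemma foldr_max_eq_of_mem {α : Type*} [LinearOrder α] [OrderBot α] {l : List α} {a : α}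
    (ha : a ∈ l) (h : ∀ x ∈ l, x ≤ a) : l.foldr max ⊥ = a :=
  le_antisymm (List.max_le_of_forall_le l a h) (List.le_max_of_le ha le_rfl)

lemma count_false_lt_count_true_take {A B : List Bool} (hA : A.count true = A.count false)
    (hB : IsDyck B) {x : ℕ} (hx : A.length < x) :
    ((A ++ true :: B).take x).count false < ((A ++ true :: B).take x).count true := by
  obtain ⟨k, rfl⟩ : ∃ k, x = A.length + 1 + k := ⟨x - A.length - 1, by omega⟩
  have hB_prefix := hB.2 (B.take k) (List.take_prefix _ _)
  have htake : (A ++ true :: B).take (A.length + 1 + k) = A ++ true :: B.take k := by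
    simp [List.take_append, Nat.add_assoc, Nat.add_comm 1 k]
  simp only [htake, List.count_append, List.count_cons]
  grind

lemma mir_append_true_cons_append_false {A B : List Bool} (hA : A.count true = A.count false)
    (hB : IsDyck B) :
    mir (A ++ true :: (B ++ [false])) = mir B ++ true :: (mir A ++ [false]) := by
  have hdrop : (A ++ true :: (B ++ [false])).dropLast = A ++ true :: B := by
    rw [show A ++ true :: (B ++ [false]) = (A ++ true :: B) ++ [false] by simp,
      List.dropLast_concat]
  have hsplit : ((List.range (A ++ true :: B).length).filter (fun j =>
      ((A ++ true :: B).take j).count true = ((A ++ true :: B).take j).count false)).foldr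
        max 0 = A.length := by
    refine foldr_max_eq_of_mem ?_ fun x hx => ?_
    · simp [hA]
    · simp only [List.mem_filter, decide_eq_true_eq] at hx
      by_contra! hlt
      exact (count_false_lt_count_true_take hA hB hlt).ne' hx.2
  rw [mir, dif_neg (by simp)]
  dsimp only
  rw [hdrop, hsplit]
  simp

lemma count_true_flatMap_eq_count_false {l : List (List Bool)}
    (h : ∀ Q ∈ l, Q.count true = Q.count false) :
    (l.flatMap fun Q => true :: (Q ++ [false])).count true =
      (l.flatMap fun Q => true :: (Q ++ [false])).count false := by
  simp only [List.count_flatMap]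
  congr 1
  refine List.map_congr_left fun Q hQ => ?_
  simp [h Q hQ]

theorem stmt9 (P1 : List Bool) (rest : List (List Bool))
    (h1 : IsDyck P1) (h : ∀ Q ∈ rest, IsDyck Q) :
    mir (P1 ++ rest.flatMap (fun Q => true :: (Q ++ [false]))) =
      (rest.reverse.map mir).flatMap (fun M => M ++ [true]) ++ mir P1 ++
        List.replicate rest.length false := by
  induction rest using List.reverseRecOn with
  | nil => simp
  | append_singleton rest Pk ih =>
    have hPk : IsDyck Pk := h Pk (by simp)
    have hrest : ∀ R ∈ rest, IsDyck R := fun R hR => h R (by simp [hR])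
    have hbal : (P1 ++ rest.flatMap fun Q => true :: (Q ++ [false])).count true =
        (P1 ++ rest.flatMap fun Q => true :: (Q ++ [false])).count false := by
      simp only [List.count_append, h1.1, count_true_flatMap_eq_count_false fun R hR => (hrest R hR).1]
    rw [List.flatMap_append, List.flatMap_singleton, ← List.append_assoc,
      mir_append_true_cons_append_false hbal hPk, ih hrest]
    simp [List.replicate_succ', List.append_assoc]
end

section
/- For any Dyck path D, mir(D) has the same size as D, and the number of non-initial contacts of D equals the length of the final maximal run of down steps of mir(D). -/
/-!
Split a nonempty Dyck path as `D₁ u D₂ d` with `D₁` its longest proper balanced prefix. Then `D₂`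
is again a Dyck path: a first dip of `D₂` below its base would give a longer balanced prefix. Both
claims follow by induction along this decomposition, since `mir D = mir D₂ u mir D₁ d`. The step
`u` and the blocks are kept, which gives the size. The contacts of `D` are those of `D₁` together
with the endpoint (an elevated path `u D₂ d` touches the axis only at its end), while the final
descent of `mir D₂ u mir D₁ d` is that of `mir D₁` followed by one more `d`.
-/

-- The length `j` of `D₁` in the definition of `mir`, as a function of `w.dropLast`.
def lastBalancedPrefixLength (e : List Bool) : ℕ :=
  ((List.range e.length).filter
    (fun j => (e.take j).count true = (e.take j).count false)).foldr max 0

theorem mir_of_ne_nil {w : List Bool} (hw : w ≠ []) :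
    mir w = mir (w.dropLast.drop (lastBalancedPrefixLength w.dropLast + 1)) ++
      true :: (mir (w.dropLast.take (lastBalancedPrefixLength w.dropLast)) ++ [false]) := by
  rw [mir, dif_neg hw]
  rfl

theorem le_lastBalancedPrefixLength {e : List Bool} {k : ℕ} (hk : k < e.length)
    (hbal : (e.take k).count true = (e.take k).count false) :
    k ≤ lastBalancedPrefixLength e :=
  List.le_max_of_le' 0 (by simp [hk, hbal]) le_rfl

theorem lastBalancedPrefixLength_spec {e : List Bool} (he : e ≠ []) :
    lastBalancedPrefixLength e < e.length ∧
      (e.take (lastBalancedPrefixLength e)).count true =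
        (e.take (lastBalancedPrefixLength e)).count false := by
  set L := (List.range e.length).filter
    (fun j => (e.take j).count true = (e.take j).count false)
  have hL : L ≠ [] := List.ne_nil_of_mem (a := 0) (by simp [L, List.length_pos_iff.mpr he])
  have hmem : L.foldr max ⊥ ∈ L := List.maximum_mem (List.foldr_max_of_ne_nil hL).symm
  simpa [L, lastBalancedPrefixLength] using hmem

theorem exists_balanced_append_false_isPrefix {l p : List Bool} (hp : p <+: l)
    (hneg : p.count true < p.count false) :
    ∃ q, q ++ [false] <+: l ∧ q.count true = q.count false := by
  induction p using List.reverseRecOn with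
  | nil => simp at hneg
  | append_singleton q c ih =>
    have hq : q <+: l := (List.prefix_append q [c]).trans hp
    by_cases hqneg : q.count true < q.count false
    · exact ih hq hqneg
    · cases c
      · exact ⟨q, hp, by grind⟩
      · grind

theorem IsDyck.of_isPrefix {w p : List Bool} (h : IsDyck w) (hp : p <+: w)
    (hbal : p.count true = p.count false) : IsDyck p :=
  ⟨hbal, fun _ hq => h.2 _ (hq.trans hp)⟩

theorem isDyck_of_forall_append_false_isPrefix {D : List Bool}
    (hbal : D.count true = D.count false)
    (h : ∀ q, q ++ [false] <+: D → q.count true ≠ q.count false) : IsDyck D := by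
  refine ⟨hbal, fun p hp => not_lt.mp fun hneg => ?_⟩
  obtain ⟨q, hq, hq_bal⟩ := exists_balanced_append_false_isPrefix hp hneg
  exact h q hq hq_bal

theorem IsDyck.dropLast_append_false {w : List Bool} (h : IsDyck w) (hw : w ≠ []) :
    w.dropLast ++ [false] = w := by
  have hsplit := List.dropLast_append_getLast hw
  cases hc : w.getLast hw
  · rw [← hc, hsplit]
  · have hle := h.2 _ (List.dropLast_prefix w)
    have hbal := h.1
    rw [← hsplit, hc] at hbal
    grind

theorem IsDyck.count_dropLast {w : List Bool} (h : IsDyck w) (hw : w ≠ []) :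
    w.dropLast.count true = w.dropLast.count false + 1 := by
  have hbal := h.1
  rw [← h.dropLast_append_false hw] at hbal
  grind

theorem count_take_ne_of_lastBalancedPrefixLength_lt {e : List Bool}
    (he : e.count true = e.count false + 1) {k : ℕ} (hk : lastBalancedPrefixLength e < k)
    (hke : k ≤ e.length) : (e.take k).count true ≠ (e.take k).count false := by
  intro hbal
  rcases hke.lt_or_eq with hke | rfl
  · exact absurd (le_lastBalancedPrefixLength hke hbal) (by omega)
  · rw [List.take_length] at hbal
    omega

theorem IsDyck.exists_decomposition {w : List Bool} (h : IsDyck w) (hw : w ≠ []) :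
    ∃ D₁ D₂, IsDyck D₁ ∧ IsDyck D₂ ∧ w = D₁ ++ true :: (D₂ ++ [false]) ∧
      mir w = mir D₂ ++ true :: (mir D₁ ++ [false]) := by
  set e := w.dropLast
  have hw_eq : e ++ [false] = w := h.dropLast_append_false hw
  have he_count : e.count true = e.count false + 1 := h.count_dropLast hw
  have he : e ≠ [] := by rintro he; simp [he] at he_count
  have he_prefix : ∀ p, p <+: e → p <+: w :=
    fun p hp => hp.trans (List.dropLast_prefix w)
  obtain ⟨hj_lt, hj_bal⟩ := lastBalancedPrefixLength_spec he
  set j := lastBalancedPrefixLength e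
  have hj_true : e[j] = true := by
    rw [← Bool.not_eq_false]
    intro hc
    have hle := h.2 _ (he_prefix _ (List.take_prefix (j + 1) e))
    rw [List.take_add_one, List.getElem?_eq_getElem hj_lt, hc] at hle
    grind
  set D₁ := e.take j
  set D₂ := e.drop (j + 1)
  have he_split : e = D₁ ++ true :: D₂ := by
    rw [← hj_true, ← List.drop_eq_getElem_cons hj_lt, List.take_append_drop]
  have hD₂_bal : D₂.count true = D₂.count false := by
    rw [he_split] at he_count
    grind
  refine ⟨D₁, D₂, h.of_isPrefix (he_prefix _ (List.take_prefix j e)) hj_bal,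
    isDyck_of_forall_append_false_isPrefix hD₂_bal fun q hq hq_bal => ?_, ?_, mir_of_ne_nil hw⟩
  · have hpre : D₁ ++ true :: (q ++ [false]) <+: e := by
      rw [he_split]
      exact (List.prefix_append_right_inj D₁).2 (List.cons_prefix_cons.2 ⟨rfl, hq⟩)
    have hne := count_take_ne_of_lastBalancedPrefixLength_lt he_count
      (by simp [D₁]; omega) hpre.length_le
    rw [← List.prefix_iff_eq_take.mp hpre] at hne
    grind
  · rw [← hw_eq, he_split]
    simp

theorem ncontacts_append {l₁ l₂ : List Bool} (h : l₁.count true = l₁.count false) :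
    ncontacts (l₁ ++ l₂) = ncontacts l₁ + ncontacts l₂ := by
  unfold ncontacts
  rw [List.length_append, List.range_add, List.filter_append, List.length_append, List.filter_map,
    List.length_map]
  congr 2
  · refine List.filter_congr fun i hi => ?_
    rw [List.take_append_of_le_length (List.mem_range.1 hi)]
  · refine List.filter_congr fun i _ => ?_
    simp only [Function.comp, Nat.add_assoc, List.take_length_add_append, List.count_append, h,
      Nat.add_left_cancel_iff]

theorem IsDyck.ncontacts_elevate {D : List Bool} (h : IsDyck D) :
    ncontacts (true :: (D ++ [false])) = 1 := by
  unfold ncontacts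
  rw [show (true :: (D ++ [false])).length = D.length + 1 + 1 by simp, List.range_succ,
    List.filter_append]
  have hinner : ((List.range (D.length + 1)).filter fun i =>
      ((true :: (D ++ [false])).take (i + 1)).count true =
        ((true :: (D ++ [false])).take (i + 1)).count false) = [] := by
    refine List.filter_eq_nil_iff.2 fun i hi => ?_
    have hi : i ≤ D.length := by simpa [Nat.lt_succ_iff] using hi
    have hle := h.2 _ (List.take_prefix i D)
    simp only [List.take_succ_cons, List.take_append_of_le_length hi]
    grind
  rw [hinner]
  simp [List.take_of_length_le, h.1]

def finalDownRun (w : List Bool) : ℕ :=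
  (w.reverse.takeWhile (fun c => c = false)).length

theorem finalDownRun_append_false (w : List Bool) :
    finalDownRun (w ++ [false]) = finalDownRun w + 1 := by
  simp [finalDownRun]

theorem finalDownRun_append_true_cons (w₁ w₂ : List Bool) :
    finalDownRun (w₁ ++ true :: w₂) = finalDownRun w₂ := by
  unfold finalDownRun
  rw [List.reverse_append, List.reverse_cons, List.append_assoc, List.takeWhile_append]
  split_ifs with h
  · rw [List.length_append, h]
    simp
  · rfl

theorem IsDyck.count_true_mir {w : List Bool} (h : IsDyck w) :
    (mir w).count true = w.count true := by
  rcases eq_or_ne w [] with rfl | hw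
  · rw [mir_nil]
  obtain ⟨D₁, D₂, h₁, h₂, hw_eq, hmir⟩ := h.exists_decomposition hw
  have ih₁ := h₁.count_true_mir
  have ih₂ := h₂.count_true_mir
  rw [hmir, hw_eq]
  grind
termination_by w.length
decreasing_by all_goals (rw [hw_eq]; simp only [List.length_append, List.length_cons]; omega)

theorem IsDyck.finalDownRun_mir {w : List Bool} (h : IsDyck w) :
    finalDownRun (mir w) = ncontacts w := by
  rcases eq_or_ne w [] with rfl | hw
  · rw [mir_nil]
    rfl
  obtain ⟨D₁, D₂, h₁, h₂, hw_eq, hmir⟩ := h.exists_decomposition hw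
  rw [hmir, finalDownRun_append_true_cons, finalDownRun_append_false, h₁.finalDownRun_mir, hw_eq,
    ncontacts_append h₁.1, h₂.ncontacts_elevate]
termination_by w.length
decreasing_by rw [hw_eq]; simp only [List.length_append, List.length_cons]; omega

theorem stmt14 (D : List Bool) (h : IsDyck D) :
    (mir D).count true = D.count true ∧
    ((mir D).reverse.takeWhile (fun c => c = false)).length = ncontacts D :=
  ⟨h.count_true_mir, h.finalDownRun_mir⟩
end
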